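/- arXiv:2203.05609 — 2 statements merged into one kernel-verified Lean document; each statement's English description precedes it below -/
import Mathlib

section
/- Let X be an approximate subgroup of a group, G := ⟨X⟩ the subgroup it generates, and let f : G → S be a locally compact model of X. Then for every neighborhood U of the identity in S whose closure is compact, the set f⁻¹[U] is commensurable with X, i.e. finitely many left translates of f⁻¹[U] cover X and finitely many left translates of X cover f⁻¹[U]. -/
/-!
If the closure of `B` is compact, the translates `b • W` (`b ∈ B`) of a small symmetric open
neighbourhood `W` of `1` cover `closure B`, so finitely many of them cover `B`. Applied in `S`
to `f '' X` this covers `X` by finitely many translates of `f⁻¹[U]`. Applied to `f '' f⁻¹[U]`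
with the neighbourhood `V` of the model, it covers `f⁻¹[U]` by finitely many translates of
`f⁻¹[V] ⊆ X ^ m`, and `X ^ m ⊆ F ^ m * X` because `X * X ⊆ F * X`.
-/

open Pointwise Set Topology

/-- A subset of a group is symmetric if it contains the identity and `X⁻¹ = X`. -/
def SymmetricSubset {G : Type*} [Group G] (X : Set G) : Prop :=
  (1 : G) ∈ X ∧ X⁻¹ = X

/-- `X` is an approximate subgroup if it is symmetric and `X·X ⊆ F·X` for some finite
subset `F` of the subgroup generated by `X`. -/
def IsApproxSubgroup {G : Type*} [Group G] (X : Set G) : Prop :=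
  SymmetricSubset X ∧ ∃ F : Set G, F.Finite ∧ F ⊆ (Subgroup.closure X : Set G) ∧
    X * X ⊆ F * X

theorem Set.Finite.pow {M : Type*} [Monoid M] {F : Set M} (hF : F.Finite) :
    ∀ m : ℕ, (F ^ m).Finite
  | 0 => by simp
  | m + 1 => by rw [pow_succ]; exact (hF.pow m).mul hF

theorem Set.pow_subset_pow_mul_of_mul_subset_mul {M : Type*} [Monoid M] {X F : Set M}
    (h1 : (1 : M) ∈ X) (hXX : X * X ⊆ F * X) (m : ℕ) : X ^ m ⊆ F ^ m * X :=
  calc X ^ m ⊆ X ^ (m + 1) := pow_subset_pow_right h1 m.le_succ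
    _ ⊆ F ^ m * X := by
      simpa using pow_subset_pow_mul_of_sq_subset_mul (by rwa [sq]) m.succ_ne_zero

theorem exists_finite_subset_mul_of_isCompact_closure {S : Type*} [Group S] [TopologicalSpace S]
    [IsTopologicalGroup S] {B V : Set S} (hB : IsCompact (closure B)) (hV : V ∈ 𝓝 1) :
    ∃ F ⊆ B, F.Finite ∧ B ⊆ F * V := by
  set W := interior V ∩ (interior V)⁻¹
  have hWo : IsOpen W := isOpen_interior.inter isOpen_interior.inv
  have hW1 : W ∈ 𝓝 1 :=
    hWo.mem_nhds ⟨mem_interior_iff_mem_nhds.2 hV, by simpa using mem_interior_iff_mem_nhds.2 hV⟩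
  have hWinv : ∀ w ∈ W, w⁻¹ ∈ W := fun w hw => ⟨hw.2, by simpa using hw.1⟩
  have hcover : closure B ⊆ ⋃ b ∈ B, (b * ·) '' W := by
    rw [iUnion_mul_left_image]
    exact closure_subset_mul_right_of_mem_nhds_one_of_inv B hW1 hWinv
  obtain ⟨F, hFB, hF, hBF⟩ :=
    hB.elim_finite_subcover_image (fun b _ => isOpenMap_mul_left b W hWo) hcover
  refine ⟨F, hFB, hF, subset_closure.trans (hBF.trans ?_)⟩
  rw [iUnion_mul_left_image]
  exact mul_subset_mul_left (inter_subset_left.trans interior_subset)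

theorem MonoidHom.preimage_image_mul_subset {G S : Type*} [Group G] [Group S] (f : G →* S)
    (F : Set G) (V : Set S) : f ⁻¹' (f '' F * V) ⊆ F * f ⁻¹' V := by
  rintro x ⟨_, ⟨c, hc, rfl⟩, v, hv, hx⟩
  refine ⟨c, hc, c⁻¹ * x, ?_, mul_inv_cancel_left c x⟩
  simpa [← hx] using hv

theorem MonoidHom.exists_finite_subset_mul_preimage {G S : Type*} [Group G] [Group S]
    [TopologicalSpace S] [IsTopologicalGroup S] (f : G →* S) {A : Set G} {V : Set S}
    (hA : IsCompact (closure (f '' A))) (hV : V ∈ 𝓝 1) :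
    ∃ F : Set G, F.Finite ∧ A ⊆ F * f ⁻¹' V := by
  obtain ⟨F, -, hF, hAF⟩ := exists_subset_image_finite_and.1
    (exists_finite_subset_mul_of_isCompact_closure hA hV)
  exact ⟨F, hF, (subset_preimage_image f A).trans
    ((preimage_mono hAF).trans (f.preimage_image_mul_subset F V))⟩

theorem locally_compact_model_preimage_commensurable_general
    {G S : Type*} [Group G] [Group S] [TopologicalSpace S] [IsTopologicalGroup S]
    (X : Set G) (hX : IsApproxSubgroup X)
    (f : G →* S) (hcomp : IsCompact (closure (⇑f '' X)))
    (hmodel : ∃ V ∈ nhds (1 : S), ∃ m : ℕ, ⇑f ⁻¹' V ⊆ X ^ m)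
    (U : Set S) (hU : U ∈ nhds (1 : S)) (hUc : IsCompact (closure U)) :
    (∃ F : Set G, F.Finite ∧ X ⊆ F * (⇑f ⁻¹' U)) ∧
      (∃ F : Set G, F.Finite ∧ ⇑f ⁻¹' U ⊆ F * X) := by
  refine ⟨f.exists_finite_subset_mul_preimage hcomp hU, ?_⟩
  obtain ⟨V, hV, m, hVX⟩ := hmodel
  obtain ⟨⟨h1, -⟩, F₀, hF₀, -, hXX⟩ := hX
  have hUc' : IsCompact (closure (f '' (f ⁻¹' U))) :=
    hUc.of_isClosed_subset isClosed_closure (closure_mono (image_preimage_subset f U))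
  obtain ⟨F, hF, hUF⟩ := f.exists_finite_subset_mul_preimage hUc' hV
  refine ⟨F * F₀ ^ m, hF.mul (hF₀.pow m), ?_⟩
  calc f ⁻¹' U ⊆ F * f ⁻¹' V := hUF
    _ ⊆ F * (F₀ ^ m * X) :=
      mul_subset_mul_left (hVX.trans (pow_subset_pow_mul_of_mul_subset_mul h1 hXX m))
    _ = F * F₀ ^ m * X := (mul_assoc _ _ _).symm

/-- Let `X` be an approximate subgroup generating the group `G`, and let `f : G →* S`
be a locally compact model of `X`. Then for every neighborhood `U` of the identity in
`S` with compact closure, `f⁻¹[U]` is commensurable with `X`: finitely many left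
translates of `f⁻¹[U]` cover `X` and finitely many left translates of `X` cover
`f⁻¹[U]`. -/
theorem locally_compact_model_preimage_commensurable
    {G S : Type*} [Group G] [Group S] [TopologicalSpace S] [IsTopologicalGroup S]
    [LocallyCompactSpace S] [T2Space S]
    (X : Set G) (hX : IsApproxSubgroup X) (hgen : Subgroup.closure X = ⊤)
    (f : G →* S) (hcomp : IsCompact (closure (⇑f '' X)))
    (hmodel : ∃ V ∈ nhds (1 : S), ∃ m : ℕ, ⇑f ⁻¹' V ⊆ X ^ m)
    (U : Set S) (hU : U ∈ nhds (1 : S)) (hUc : IsCompact (closure U)) :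
    (∃ F : Set G, F.Finite ∧ X ⊆ F * (⇑f ⁻¹' U)) ∧
      (∃ F : Set G, F.Finite ∧ ⇑f ⁻¹' U ⊆ F * X) :=
  locally_compact_model_preimage_commensurable_general X hX f hcomp hmodel U hU hUc
end

section
/- Let X be an approximate subring of a ring, R := ⟨X⟩ the subring it generates, and let f : R → S be a locally compact model of X. Then for every neighborhood U of 0 in S whose closure is compact, the set f⁻¹[U] is additively commensurable with X, i.e. finitely many additive translates of f⁻¹[U] cover X and finitely many additive translates of X cover f⁻¹[U]. -/
/-
Algebraic half: the elements `a` for which `a·X` is covered by finitely many additive translates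
of `X` form a subring (if `b·X ⊆ G + X` then `ab·X ⊆ a·G + a·X`), and it contains `X` because
`X·X ⊆ F + X`; so it is everything, and likewise for `X·a`. Expanding `(F + X)(G + X)` then
shows by induction that every `X_n` is covered by finitely many translates of `X`.

Topological half: if `f[Y]` has compact closure, then for every neighbourhood `U` of `0`
finitely many translates `f y + U` with `y ∈ Y` cover `f[Y]`, so finitely many translates of
`f⁻¹[U]` cover `Y`. Applied to `Y = X` this gives one direction; applied to `Y = f⁻¹[U]` and the
neighbourhood `V` of the model it covers `f⁻¹[U]` by translates of `f⁻¹[V] ⊆ X_m`, hence of `X`.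
-/

open Pointwise

/-- A subset of a (not necessarily unital or commutative) ring is additively symmetric
if it contains `0` and `-X = X`. -/
def AddSymmetric {R : Type*} [NonUnitalRing R] (X : Set R) : Prop :=
  (0 : R) ∈ X ∧ -X = X

/-- `X` is an approximate subring if it is additively symmetric and
`X·X ∪ (X+X) ⊆ F + X` for some finite subset `F` of the subring generated by `X`. -/
def IsApproxSubring {R : Type*} [NonUnitalRing R] (X : Set R) : Prop :=
  AddSymmetric X ∧ ∃ F : Set R, F.Finite ∧ F ⊆ (NonUnitalSubring.closure X : Set R) ∧
    X * X ∪ (X + X) ⊆ F + X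

/-- The sequence `X_0 := X`, `X_{n+1} := X_n·X_n + (X_n + X_n)`. -/
def XSeq {R : Type*} [NonUnitalRing R] (X : Set R) : ℕ → Set R
  | 0 => X
  | n + 1 => XSeq X n * XSeq X n + (XSeq X n + XSeq X n)

open Set Topology

def AddCoveredBy {G : Type*} [Add G] (A X : Set G) : Prop :=
  ∃ F : Set G, F.Finite ∧ A ⊆ F + X

namespace AddCoveredBy

variable {G : Type*} {A B C X : Set G}

lemma of_subset [AddZeroClass G] (h : A ⊆ X) : AddCoveredBy A X :=
  ⟨0, finite_zero, by rwa [zero_add]⟩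

lemma trans [AddSemigroup G] (hA : AddCoveredBy A B) (hB : AddCoveredBy B C) :
    AddCoveredBy A C :=
  let ⟨F, hF, hAF⟩ := hA
  let ⟨H, hH, hBH⟩ := hB
  ⟨F + H, hF.add hH, hAF.trans <| (add_subset_add_left hBH).trans (add_assoc F H C).symm.subset⟩

lemma add [AddCommSemigroup G] {Y : Set G} (hA : AddCoveredBy A X) (hB : AddCoveredBy B Y) :
    AddCoveredBy (A + B) (X + Y) :=
  let ⟨F, hF, hAF⟩ := hA
  let ⟨H, hH, hBH⟩ := hB
  ⟨F + H, hF.add hH, (add_subset_add hAF hBH).trans (add_add_add_comm F X H Y).subset⟩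

lemma neg [SubtractionCommMonoid G] (h : AddCoveredBy A X) : AddCoveredBy (-A) (-X) :=
  let ⟨F, hF, hAF⟩ := h
  ⟨-F, hF.neg, (neg_subset_neg.2 hAF).trans (neg_add F X).subset⟩

lemma biUnion [Add G] {ι : Type*} {I : Set ι} (hI : I.Finite) {A : ι → Set G}
    (h : ∀ i ∈ I, AddCoveredBy (A i) X) : AddCoveredBy (⋃ i ∈ I, A i) X := by
  have := hI.to_subtype
  choose F hF hAF using fun i : I => h i i.2
  rw [biUnion_eq_iUnion]
  exact ⟨⋃ i, F i, finite_iUnion hF,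
    iUnion_subset fun i => (hAF i).trans (add_subset_add_right (subset_iUnion F i))⟩

end AddCoveredBy

lemma Set.Finite.addCoveredBy {G : Type*} [AddZeroClass G] {A X : Set G} (hA : A.Finite)
    (h0 : (0 : G) ∈ X) : AddCoveredBy A X :=
  ⟨A, hA, subset_add_left A h0⟩

lemma Set.Finite.addCoveredBy_add {G : Type*} [Add G] {F : Set G} (hF : F.Finite) (A : Set G) :
    AddCoveredBy (F + A) A :=
  ⟨F, hF, subset_rfl⟩

namespace IsApproxSubring

variable {R : Type*} [NonUnitalRing R] {X A B : Set R}

lemma zero_mem (hX : IsApproxSubring X) : (0 : R) ∈ X := hX.1.1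

lemma neg_eq (hX : IsApproxSubring X) : -X = X := hX.1.2

lemma addCoveredBy_mul_self (hX : IsApproxSubring X) : AddCoveredBy (X * X) X :=
  let ⟨F, hF, _, hXF⟩ := hX.2
  ⟨F, hF, subset_union_left.trans hXF⟩

lemma addCoveredBy_add_self (hX : IsApproxSubring X) : AddCoveredBy (X + X) X :=
  let ⟨F, hF, _, hXF⟩ := hX.2
  ⟨F, hF, subset_union_right.trans hXF⟩

lemma addCoveredBy_add (hX : IsApproxSubring X) (hA : AddCoveredBy A X)
    (hB : AddCoveredBy B X) : AddCoveredBy (A + B) X :=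
  (hA.add hB).trans hX.addCoveredBy_add_self

lemma addCoveredBy_singleton_mul (hX : IsApproxSubring X) {a : R}
    (ha : a ∈ NonUnitalSubring.closure X) : AddCoveredBy ({a} * X) X := by
  induction ha using NonUnitalSubring.closure_induction with
  | mem x hx =>
    exact (AddCoveredBy.of_subset (mul_subset_mul_right (singleton_subset_iff.2 hx))).trans
      hX.addCoveredBy_mul_self
  | zero =>
    refine (AddCoveredBy.of_subset ?_).trans ((finite_singleton 0).addCoveredBy hX.zero_mem)
    rintro _ ⟨_, rfl, z, -, rfl⟩
    exact zero_mul z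
  | add x y _ _ hx hy =>
    refine (AddCoveredBy.of_subset ?_).trans (hX.addCoveredBy_add hx hy)
    rintro _ ⟨_, rfl, z, hz, rfl⟩
    dsimp only
    rw [add_mul]
    exact add_mem_add (mul_mem_mul rfl hz) (mul_mem_mul rfl hz)
  | neg x _ hx =>
    refine (AddCoveredBy.of_subset ?_).trans (hX.neg_eq ▸ hx.neg)
    rintro _ ⟨_, rfl, z, hz, rfl⟩
    dsimp only
    rw [neg_mul]
    exact neg_mem_neg.2 (mul_mem_mul rfl hz)
  | mul x y _ _ hx hy =>
    obtain ⟨G, hG, hyG⟩ := hy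
    have hsub : {x * y} * X ⊆ {x} * G + {x} * X := by
      rw [← singleton_mul_singleton, mul_assoc]
      exact (mul_subset_mul_left hyG).trans (mul_add_subset _ _ _)
    exact (AddCoveredBy.of_subset hsub).trans
      ((((finite_singleton x).mul hG).addCoveredBy_add _).trans hx)

lemma addCoveredBy_mul_singleton (hX : IsApproxSubring X) {a : R}
    (ha : a ∈ NonUnitalSubring.closure X) : AddCoveredBy (X * {a}) X := by
  induction ha using NonUnitalSubring.closure_induction with
  | mem x hx =>
    exact (AddCoveredBy.of_subset (mul_subset_mul_left (singleton_subset_iff.2 hx))).trans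
      hX.addCoveredBy_mul_self
  | zero =>
    refine (AddCoveredBy.of_subset ?_).trans ((finite_singleton 0).addCoveredBy hX.zero_mem)
    rintro _ ⟨z, -, _, rfl, rfl⟩
    exact mul_zero z
  | add x y _ _ hx hy =>
    refine (AddCoveredBy.of_subset ?_).trans (hX.addCoveredBy_add hx hy)
    rintro _ ⟨z, hz, _, rfl, rfl⟩
    dsimp only
    rw [mul_add]
    exact add_mem_add (mul_mem_mul hz rfl) (mul_mem_mul hz rfl)
  | neg x _ hx =>
    refine (AddCoveredBy.of_subset ?_).trans (hX.neg_eq ▸ hx.neg)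
    rintro _ ⟨z, hz, _, rfl, rfl⟩
    dsimp only
    rw [mul_neg]
    exact neg_mem_neg.2 (mul_mem_mul hz rfl)
  | mul x y _ _ hx hy =>
    obtain ⟨G, hG, hxG⟩ := hx
    have hsub : X * {x * y} ⊆ G * {y} + X * {y} := by
      rw [← singleton_mul_singleton, ← mul_assoc]
      exact (mul_subset_mul_right hxG).trans (add_mul_subset _ _ _)
    exact (AddCoveredBy.of_subset hsub).trans
      (((hG.mul (finite_singleton y)).addCoveredBy_add _).trans hy)

lemma addCoveredBy_mul (hX : IsApproxSubring X) (hgen : NonUnitalSubring.closure X = ⊤)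
    (hA : AddCoveredBy A X) (hB : AddCoveredBy B X) : AddCoveredBy (A * B) X := by
  have hmem (a : R) : a ∈ NonUnitalSubring.closure X := hgen ▸ NonUnitalSubring.mem_top a
  obtain ⟨F, hF, hAF⟩ := hA
  obtain ⟨G, hG, hBG⟩ := hB
  have hFX : AddCoveredBy (F * X) X := by
    rw [← iUnion_mul_left_image]
    exact .biUnion hF fun a _ => singleton_mul (a := a) ▸ hX.addCoveredBy_singleton_mul (hmem a)
  have hXG : AddCoveredBy (X * G) X := by
    rw [← iUnion_mul_right_image]
    exact .biUnion hG fun a _ => mul_singleton (b := a) ▸ hX.addCoveredBy_mul_singleton (hmem a)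
  have hexpand : A * B ⊆ F * G + F * X + (X * G + X * X) :=
    (mul_subset_mul hAF hBG).trans <| (add_mul_subset _ _ _).trans <|
      add_subset_add (mul_add_subset _ _ _) (mul_add_subset _ _ _)
  exact (AddCoveredBy.of_subset hexpand).trans <|
    hX.addCoveredBy_add (hX.addCoveredBy_add ((hF.mul hG).addCoveredBy hX.zero_mem) hFX)
      (hX.addCoveredBy_add hXG hX.addCoveredBy_mul_self)

lemma addCoveredBy_xSeq (hX : IsApproxSubring X) (hgen : NonUnitalSubring.closure X = ⊤) :
    ∀ n, AddCoveredBy (XSeq X n) X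
  | 0 => .of_subset subset_rfl
  | n + 1 =>
    have h := hX.addCoveredBy_xSeq hgen n
    hX.addCoveredBy_add (hX.addCoveredBy_mul hgen h h) (hX.addCoveredBy_add h h)

end IsApproxSubring

lemma IsCompact.exists_finite_subset_add_of_closure {G : Type*} [AddGroup G] [TopologicalSpace G]
    [IsTopologicalAddGroup G] {D U : Set G} (hD : IsCompact (closure D)) (hU : U ∈ 𝓝 0) :
    ∃ t ⊆ D, t.Finite ∧ D ⊆ t + U := by
  have hcover : closure D ⊆ ⋃ d ∈ D, d +ᵥ interior U := by
    intro y hy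
    have hnhds : y +ᵥ -interior U ∈ 𝓝 y := by
      refine (isOpen_interior.neg.vadd y).mem_nhds ⟨0, ?_, add_zero y⟩
      simpa using mem_interior_iff_mem_nhds.2 hU
    obtain ⟨d, ⟨u, hu, rfl⟩, hdD⟩ := mem_closure_iff_nhds.1 hy _ hnhds
    exact mem_biUnion hdD ⟨-u, hu, by simp [vadd_eq_add]⟩
  obtain ⟨t, htD, ht, hDt⟩ := hD.elim_finite_subcover_image
    (fun d _ => isOpen_interior.vadd d) hcover
  refine ⟨t, htD, ht, subset_closure.trans (hDt.trans ?_)⟩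
  rw [iUnion_vadd_set]
  exact add_subset_add_left interior_subset

lemma addCoveredBy_preimage_of_isCompact_closure_image {R S F : Type*} [AddGroup R] [AddGroup S]
    [TopologicalSpace S] [IsTopologicalAddGroup S] [FunLike F R S] [AddMonoidHomClass F R S]
    (f : F) {Y : Set R} {U : Set S} (hY : IsCompact (closure (f '' Y))) (hU : U ∈ 𝓝 0) :
    AddCoveredBy Y (f ⁻¹' U) := by
  obtain ⟨t, htY, ht, hYt⟩ := hY.exists_finite_subset_add_of_closure hU
  obtain ⟨T, -, hT, rfl⟩ := exists_subset_image_finite_and.1 ⟨t, htY, ht, rfl⟩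
  refine ⟨T, hT, fun y hy => ?_⟩
  obtain ⟨_, ⟨x, hx, rfl⟩, u, hu, hxu⟩ := hYt (mem_image_of_mem f hy)
  refine ⟨x, hx, -x + y, ?_, add_neg_cancel_left x y⟩
  simpa [← hxu] using hu

theorem locally_compact_ring_model_preimage_commensurable_general
    {R S : Type*} [NonUnitalRing R] [NonUnitalRing S] [TopologicalSpace S]
    [IsTopologicalRing S]
    (X : Set R) (hX : IsApproxSubring X) (hgen : NonUnitalSubring.closure X = ⊤)
    (f : R →ₙ+* S) (hcomp : IsCompact (closure (⇑f '' X)))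
    (hmodel : ∃ V ∈ nhds (0 : S), ∃ m : ℕ, ⇑f ⁻¹' V ⊆ XSeq X m)
    (U : Set S) (hU : U ∈ nhds (0 : S)) (hUc : IsCompact (closure U)) :
    (∃ F : Set R, F.Finite ∧ X ⊆ F + ⇑f ⁻¹' U) ∧
      (∃ F : Set R, F.Finite ∧ ⇑f ⁻¹' U ⊆ F + X) := by
  obtain ⟨V, hV, m, hVm⟩ := hmodel
  have hUV : AddCoveredBy (f ⁻¹' U) (f ⁻¹' V) :=
    addCoveredBy_preimage_of_isCompact_closure_image f
      (hUc.of_isClosed_subset isClosed_closure (closure_mono (image_preimage_subset f U))) hV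
  exact ⟨addCoveredBy_preimage_of_isCompact_closure_image f hcomp hU,
    (hUV.trans (.of_subset hVm)).trans (hX.addCoveredBy_xSeq hgen m)⟩

/-- Let `X` be an approximate subring generating the ring `R`, and let `f : R →ₙ+* S`
be a locally compact model of `X`. Then for every neighborhood `U` of `0` in `S` with
compact closure, `f⁻¹[U]` is additively commensurable with `X`. -/
theorem locally_compact_ring_model_preimage_commensurable
    {R S : Type*} [NonUnitalRing R] [NonUnitalRing S] [TopologicalSpace S]
    [IsTopologicalRing S] [LocallyCompactSpace S] [T2Space S]
    (X : Set R) (hX : IsApproxSubring X) (hgen : NonUnitalSubring.closure X = ⊤)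
    (f : R →ₙ+* S) (hcomp : IsCompact (closure (⇑f '' X)))
    (hmodel : ∃ V ∈ nhds (0 : S), ∃ m : ℕ, ⇑f ⁻¹' V ⊆ XSeq X m)
    (U : Set S) (hU : U ∈ nhds (0 : S)) (hUc : IsCompact (closure U)) :
    (∃ F : Set R, F.Finite ∧ X ⊆ F + ⇑f ⁻¹' U) ∧
      (∃ F : Set R, F.Finite ∧ ⇑f ⁻¹' U ⊆ F + X) :=
  locally_compact_ring_model_preimage_commensurable_general X hX hgen f hcomp hmodel U hU hUc
end
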